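/- arXiv:1511.02328 — 6 statements merged into one kernel-verified Lean document; each statement's English description precedes it below -/
import Mathlib

section
/- Let 𝒜 be a symmetric real tensor of even order m and dimension n. Then the function x ↦ 𝒜x^m attains a minimum value μ on the set {x ∈ ℝ^n : ‖x‖_m = 1}; this value μ is an H-eigenvalue of 𝒜, and every H-eigenvalue λ of 𝒜 satisfies λ ≥ μ. Consequently λ_min(𝒜) = min_{x ≠ 0} 𝒜x^m/‖x‖_m^m = min_{‖x‖_m = 1} 𝒜x^m, where λ_min(𝒜) denotes the minimum H-eigenvalue of 𝒜. -/
open MvPolynomial Finset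

noncomputable section

/-- `tmul A x = 𝒜 x^m`, the homogeneous form associated with an
`m`-th order `n`-dimensional tensor `A`. -/
def tmul {m n : ℕ} (A : (Fin m → Fin n) → ℝ) (x : Fin n → ℝ) : ℝ :=
  ∑ g : Fin m → Fin n, A g * ∏ j, x (g j)

/-- A tensor is symmetric if its entries are invariant under permutations of the indices. -/
def IsSymT {m n : ℕ} (A : (Fin m → Fin n) → ℝ) : Prop :=
  ∀ (σ : Equiv.Perm (Fin m)) (g : Fin m → Fin n), A (g ∘ σ) = A g

/-- `lam` is an H-eigenvalue of a tensor of order `m + 1`: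
there is a nonzero `x` with `𝒜 x^m = lam * x^{[m]}`. -/
def IsHEig {m n : ℕ} (A : (Fin (m + 1) → Fin n) → ℝ) (lam : ℝ) : Prop :=
  ∃ x : Fin n → ℝ, x ≠ 0 ∧ ∀ i : Fin n,
    (∑ g : Fin m → Fin n, A (Fin.cons i g) * ∏ j, x (g j)) = lam * x i ^ m

/-- `𝒜_Γ x_Γ^m` for a subtensor `B` indexed by an index set `Γ ⊆ {1,…,n}`. -/
def subTmul {m n : ℕ} (Γ : Finset (Fin n)) (B : (Fin m → Γ) → ℝ) (x : Fin n → ℝ) : ℝ :=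
  ∑ g : Fin m → Γ, B g * ∏ j, x (g j).1

/-- An index tuple is off-diagonal if not all of its entries coincide. -/
def NotDiag {m : ℕ} {I : Type*} (g : Fin m → I) : Prop := ¬ ∀ j j' : Fin m, g j = g j'

/-- Condition (iii) in the definition of a W-tensor, for one subtensor. -/
def WCondIII {m n : ℕ} {Γ : Finset (Fin n)} (B : (Fin m → Γ) → ℝ) : Prop :=
  (∃ gb : Fin m → Γ, NotDiag gb ∧ ∀ g : Fin m → Γ, NotDiag g →
      (∀ σ : Equiv.Perm (Fin m), g ≠ gb ∘ σ) → B g = 0) ∨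
  (∀ g : Fin m → Γ, NotDiag g → 0 ≤ B g)

/-- Condition (i) in the definition of a W-tensor. -/
def WCondI {n s : ℕ} (Γ : Fin s → Finset (Fin n)) : Prop :=
  ∀ p : Fin s, 0 < (p : ℕ) →
    (((Finset.univ.filter fun l => l < p).biUnion Γ) ∩ Γ p).card ≤ 1

/-- W-tensor. -/
def IsWTensor {m n : ℕ} (A : (Fin m → Fin n) → ℝ) : Prop :=
  ∃ (s : ℕ) (Γ : Fin s → Finset (Fin n)) (B : ∀ l : Fin s, (Fin m → Γ l) → ℝ),
    0 < s ∧ s ≤ n ∧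
    Function.Injective Γ ∧
    Finset.univ.biUnion Γ = Finset.univ ∧
    WCondI Γ ∧
    (∀ x : Fin n → ℝ, tmul A x = ∑ l, subTmul (Γ l) (B l) x) ∧
    (∀ l, WCondIII (B l))

/-- Sums of squares of polynomials. -/
def IsSOSPoly {σ : Type*} (p : MvPolynomial σ ℝ) : Prop :=
  ∃ (r : ℕ) (q : Fin r → MvPolynomial σ ℝ), p = ∑ j, q j ^ 2

/-- The polynomial `𝒜 x^m` as a formal multivariate polynomial. -/
def tpoly {m n : ℕ} (A : (Fin m → Fin n) → ℝ) : MvPolynomial (Fin n) ℝ :=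
  ∑ g : Fin m → Fin n, MvPolynomial.C (A g) * ∏ j, MvPolynomial.X (g j)

/-- The polynomial `𝒜_Γ x_Γ^m` of a subtensor, in the variables `x_Γ`. -/
def subTpoly {m n : ℕ} (Γ : Finset (Fin n)) (B : (Fin m → Γ) → ℝ) : MvPolynomial Γ ℝ :=
  ∑ g : Fin m → Γ, MvPolynomial.C (B g) * ∏ j, MvPolynomial.X (g j)

/-- A (symmetric) tensor is copositive if `𝒜 x^m ≥ 0` for all entrywise-nonnegative `x`. -/
def Copositive {m n : ℕ} (A : (Fin m → Fin n) → ℝ) : Prop :=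
  ∀ x : Fin n → ℝ, (∀ i, 0 ≤ x i) → 0 ≤ tmul A x


/-!
By compactness `𝒜x^m` attains a minimum `μ` on the sphere `∑ xᵢ^m = 1`, and by homogeneity
`μ ‖y‖_m^m ≤ 𝒜y^m` for every `y`. So for a minimiser `x₀`, the function
`t ↦ 𝒜(x₀ + t eᵢ)^m - μ ‖x₀ + t eᵢ‖_m^m` has a global minimum at `t = 0`; by symmetry of `𝒜`
its derivative there is `m (𝒜x₀^{m-1} - μ x₀^{[m-1]})ᵢ`, so `μ` is an H-eigenvalue.
Conversely an eigenpair `(λ, y)` gives `λ ‖y‖_m^m = 𝒜y^m ≥ μ ‖y‖_m^m`.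
-/

variable {m n : ℕ}

theorem Fin.prod_univ_erase_zero {M : Type*} [CommMonoid M] (f : Fin (m + 1) → M) :
    ∏ k ∈ univ.erase 0, f k = ∏ j : Fin m, f j.succ := by
  rw [Fin.univ_succ, erase_cons, prod_map]
  rfl

theorem Fin.sum_univ_fun_succ {α M : Type*} [Fintype α] [AddCommMonoid M]
    (F : (Fin (m + 1) → α) → M) : ∑ g, F g = ∑ c, ∑ h : Fin m → α, F (Fin.cons c h) := by
  rw [← (Fin.consEquiv fun _ => α).sum_comp, Fintype.sum_prod_type]
  rfl

/-- The vector `𝒜x^{m-1}` of the paper, for a tensor `A` of order `m + 1`. -/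
def tmulVec (A : (Fin (m + 1) → Fin n) → ℝ) (x : Fin n → ℝ) (i : Fin n) : ℝ :=
  ∑ h : Fin m → Fin n, A (Fin.cons i h) * ∏ j, x (h j)

theorem tmul_smul (A : (Fin m → Fin n) → ℝ) (t : ℝ) (x : Fin n → ℝ) :
    tmul A (t • x) = t ^ m * tmul A x := by
  simp only [tmul, mul_sum, Pi.smul_apply, smul_eq_mul, prod_mul_distrib, prod_const, card_univ,
    Fintype.card_fin]
  exact sum_congr rfl fun _ _ => by ring

theorem tmul_zero (A : (Fin m → Fin n) → ℝ) (hm0 : m ≠ 0) : tmul A 0 = 0 := by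
  simpa [zero_pow hm0] using tmul_smul A 0 0

theorem tmul_eq_sum_mul_tmulVec (A : (Fin (m + 1) → Fin n) → ℝ) (x : Fin n → ℝ) :
    tmul A x = ∑ i, x i * tmulVec A x i := by
  simp only [tmul, tmulVec, Fin.sum_univ_fun_succ, Fin.prod_univ_succ, Fin.cons_zero,
    Fin.cons_succ, mul_sum]
  exact sum_congr rfl fun _ _ => sum_congr rfl fun _ _ => by ring

theorem IsSymT.sum_mul_comp_perm {A : (Fin m → Fin n) → ℝ} (hsym : IsSymT A)
    (σ : Equiv.Perm (Fin m)) (Φ : (Fin m → Fin n) → ℝ) :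
    ∑ g, A g * Φ (g ∘ σ) = ∑ g, A g * Φ g :=
  Fintype.sum_equiv (Equiv.arrowCongr σ.symm (Equiv.refl _)) _ _ fun g => by
    simp [Equiv.arrowCongr, hsym σ g]

theorem IsSymT.sum_mul_prod_erase {A : (Fin (m + 1) → Fin n) → ℝ} (hsym : IsSymT A)
    (x e : Fin n → ℝ) (j : Fin (m + 1)) :
    ∑ g, A g * (e (g j) * ∏ k ∈ univ.erase j, x (g k)) =
      ∑ g, A g * (e (g 0) * ∏ k ∈ univ.erase 0, x (g k)) := by
  refine (hsym.sum_mul_comp_perm (Equiv.swap 0 j)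
    fun g => e (g j) * ∏ k ∈ univ.erase j, x (g k)).symm.trans (sum_congr rfl fun g _ => ?_)
  have hσ : (univ.erase j).map (Equiv.swap 0 j).toEmbedding = univ.erase 0 := by
    rw [map_erase, map_univ_equiv]
    simp
  rw [Function.comp_apply, Equiv.swap_apply_right, ← hσ, prod_map]
  rfl

theorem IsSymT.hasDerivAt_tmul_add_smul_single {A : (Fin (m + 1) → Fin n) → ℝ} (hsym : IsSymT A)
    (x : Fin n → ℝ) (i : Fin n) :
    HasDerivAt (fun t : ℝ => tmul A (x + t • Pi.single i 1)) ((m + 1) * tmulVec A x i) 0 := by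
  set e : Fin n → ℝ := Pi.single i 1
  have hfactor (g : Fin (m + 1) → Fin n) (k : Fin (m + 1)) :
      HasDerivAt (fun t : ℝ => (x + t • e) (g k)) (e (g k)) 0 := by
    simpa using ((hasDerivAt_id (0 : ℝ)).mul_const (e (g k))).const_add (x (g k))
  have hterm (g : Fin (m + 1) → Fin n) : HasDerivAt (fun t : ℝ => A g * ∏ k, (x + t • e) (g k))
      (A g * ∑ j, e (g j) * ∏ k ∈ univ.erase j, x (g k)) 0 := by
    simpa [mul_comm] using (HasDerivAt.fun_finsetProd fun k _ => hfactor g k).const_mul (A g)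
  refine (HasDerivAt.fun_sum fun g _ => hterm g).congr_deriv ?_
  calc ∑ g, A g * ∑ j, e (g j) * ∏ k ∈ univ.erase j, x (g k)
      = ∑ j : Fin (m + 1), ∑ g, A g * (e (g j) * ∏ k ∈ univ.erase j, x (g k)) := by
        simp_rw [mul_sum]
        exact sum_comm
    _ = ∑ _j : Fin (m + 1), ∑ g, A g * (e (g 0) * ∏ k ∈ univ.erase 0, x (g k)) :=
        sum_congr rfl fun j _ => hsym.sum_mul_prod_erase x e j
    _ = (m + 1) * tmulVec A x i := by
        simp [Fin.sum_univ_fun_succ, Fin.prod_univ_erase_zero, e, Pi.single_apply, tmulVec]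

theorem hasDerivAt_sum_pow_add_smul_single (p : ℕ) (x : Fin n → ℝ) (i : Fin n) :
    HasDerivAt (fun t : ℝ => ∑ k, (x + t • (Pi.single i 1 : Fin n → ℝ)) k ^ (p + 1))
      ((p + 1) * x i ^ p) 0 := by
  set e : Fin n → ℝ := Pi.single i 1
  have hterm (k : Fin n) : HasDerivAt (fun t : ℝ => (x + t • e) k ^ (p + 1))
      ((p + 1) * x k ^ p * e k) 0 := by
    simpa using (((hasDerivAt_id (0 : ℝ)).mul_const (e k)).const_add (x k)).fun_pow (p + 1)
  refine (HasDerivAt.fun_sum fun k _ => hterm k).congr_deriv ?_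
  simp [e, Pi.single_apply]

theorem sum_pow_pos_of_ne_zero {p : ℕ} (hp : Even p) {x : Fin n → ℝ} (hx : x ≠ 0) :
    0 < ∑ i, x i ^ p := by
  obtain ⟨k, hk⟩ := Function.ne_iff.mp hx
  exact sum_pos' (fun i _ => hp.pow_nonneg _) ⟨k, mem_univ k, hp.pow_pos hk⟩

theorem isCompact_sum_pow_eq_one {p : ℕ} (hp : Even p) (hp0 : p ≠ 0) :
    IsCompact {x : Fin n → ℝ | ∑ i, x i ^ p = 1} := by
  refine Metric.isCompact_of_isClosed_isBounded (isClosed_eq (by fun_prop) continuous_const) ?_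
  refine (Metric.isBounded_closedBall (x := 0) (r := 1)).subset fun x hx => ?_
  rw [Metric.mem_closedBall, dist_zero_right, pi_norm_le_iff_of_nonneg zero_le_one]
  intro i
  rw [Real.norm_eq_abs, ← pow_le_one_iff_of_nonneg (abs_nonneg _) hp0, hp.pow_abs]
  exact hx ▸ single_le_sum (fun k _ => hp.pow_nonneg (x k)) (mem_univ i)

theorem continuous_tmul (A : (Fin m → Fin n) → ℝ) : Continuous (tmul A) := by
  unfold tmul
  fun_prop

theorem exists_isMinOn_tmul_sum_pow_eq_one (A : (Fin m → Fin n) → ℝ) (hn : 0 < n) (hm : Even m)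
    (hm0 : m ≠ 0) :
    ∃ x₀, ∑ i, x₀ i ^ m = 1 ∧ IsMinOn (tmul A) {x | ∑ i, x i ^ m = 1} x₀ := by
  refine (isCompact_sum_pow_eq_one hm hm0).exists_isMinOn ⟨Pi.single ⟨0, hn⟩ 1, ?_⟩
    (continuous_tmul A).continuousOn
  simp [Pi.single_apply, apply_ite (· ^ m), zero_pow hm0]

theorem IsMinOn.mul_sum_pow_le_tmul {A : (Fin m → Fin n) → ℝ} {x₀ : Fin n → ℝ} (hm : Even m)
    (hm0 : m ≠ 0) (hmin : IsMinOn (tmul A) {x | ∑ i, x i ^ m = 1} x₀) (y : Fin n → ℝ) :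
    tmul A x₀ * ∑ i, y i ^ m ≤ tmul A y := by
  rcases eq_or_ne y 0 with rfl | hy
  · simp [zero_pow hm0, tmul_zero A hm0]
  set c := ∑ i, y i ^ m
  have hc : 0 < c := sum_pow_pos_of_ne_zero hm hy
  set t : ℝ := c⁻¹ ^ ((m : ℝ)⁻¹)
  have ht : t ^ m = c⁻¹ := Real.rpow_inv_natCast_pow (inv_nonneg.2 hc.le) hm0
  have hmem : t • y ∈ {x | ∑ i, x i ^ m = 1} := by
    simp [mul_pow, ← mul_sum, ht, c, hc.ne']
  have hle : tmul A x₀ ≤ tmul A (t • y) := hmin hmem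
  rw [tmul_smul, ht, le_inv_mul_iff₀ hc] at hle
  linarith

section Eigen

variable {A : (Fin (m + 1) → Fin n) → ℝ} {x₀ : Fin n → ℝ}

theorem IsSymT.tmulVec_eq_of_isMinOn (hsym : IsSymT A) (hm : Even (m + 1))
    (hx₀ : ∑ i, x₀ i ^ (m + 1) = 1)
    (hmin : IsMinOn (tmul A) {x | ∑ i, x i ^ (m + 1) = 1} x₀) (i : Fin n) :
    tmulVec A x₀ i = tmul A x₀ * x₀ i ^ m := by
  set e : Fin n → ℝ := Pi.single i 1
  have hloc : IsLocalMin
      (fun t : ℝ => tmul A (x₀ + t • e) - tmul A x₀ * ∑ k, (x₀ + t • e) k ^ (m + 1)) 0 :=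
    Filter.Eventually.of_forall fun t => by
      simpa [hx₀] using hmin.mul_sum_pow_le_tmul hm m.succ_ne_zero (x₀ + t • e)
  have hderiv := hloc.hasDerivAt_eq_zero ((hsym.hasDerivAt_tmul_add_smul_single x₀ i).sub
    ((hasDerivAt_sum_pow_add_smul_single m x₀ i).const_mul (tmul A x₀)))
  have hm1 : (m : ℝ) + 1 ≠ 0 := by positivity
  exact mul_left_cancel₀ hm1 (by linear_combination hderiv)

theorem IsMinOn.le_of_isHEig (hm : Even (m + 1))
    (hmin : IsMinOn (tmul A) {x | ∑ i, x i ^ (m + 1) = 1} x₀) {lam : ℝ} (hlam : IsHEig A lam) :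
    tmul A x₀ ≤ lam := by
  obtain ⟨y, hy, hyeig⟩ := hlam
  have htmul : tmul A y = lam * ∑ i, y i ^ (m + 1) := by
    rw [tmul_eq_sum_mul_tmulVec, mul_sum]
    exact sum_congr rfl fun i _ => by rw [tmulVec, hyeig i]; ring
  have hle := hmin.mul_sum_pow_le_tmul hm m.succ_ne_zero y
  rw [htmul] at hle
  exact le_of_mul_le_mul_right hle (sum_pow_pos_of_ne_zero hm hy)

end Eigen

/-- Lemma 2.1 (minimum part): for an even-order symmetric tensor, `𝒜x^m`
attains a minimum `μ` on the unit `m`-sphere `{x : ‖x‖_m = 1}`; this value is the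
minimum H-eigenvalue, and `λ_min = min_{x ≠ 0} 𝒜x^m / ‖x‖_m^m`. -/
theorem lemma21_min (m n : ℕ) (hn : 0 < n) (heven : Even (m + 1))
    (A : (Fin (m + 1) → Fin n) → ℝ) (hsym : IsSymT A) :
    ∃ μ : ℝ,
      (∃ x : Fin n → ℝ, (∑ i, x i ^ (m + 1)) = 1 ∧ tmul A x = μ) ∧
      (∀ x : Fin n → ℝ, (∑ i, x i ^ (m + 1)) = 1 → μ ≤ tmul A x) ∧
      IsHEig A μ ∧
      (∀ lam : ℝ, IsHEig A lam → μ ≤ lam) ∧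
      (∀ x : Fin n → ℝ, x ≠ 0 → μ ≤ tmul A x / ∑ i, |x i| ^ (m + 1)) := by
  obtain ⟨x₀, hx₀, hmin⟩ := exists_isMinOn_tmul_sum_pow_eq_one A hn heven m.succ_ne_zero
  have hx₀_ne : x₀ ≠ 0 := by
    rintro rfl
    simp at hx₀
  refine ⟨tmul A x₀, ⟨x₀, hx₀, rfl⟩, fun x hx => hmin hx,
    ⟨x₀, hx₀_ne, hsym.tmulVec_eq_of_isMinOn heven hx₀ hmin⟩,
    fun lam hlam => hmin.le_of_isHEig heven hlam, fun x hx => ?_⟩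
  rw [sum_congr rfl fun i _ => heven.pow_abs (x i), le_div_iff₀ (sum_pow_pos_of_ne_zero heven hx)]
  exact hmin.mul_sum_pow_le_tmul heven m.succ_ne_zero x

end
end

section
/- Let d ∈ ℕ, let b_1,…,b_n ≥ 0 be real numbers, let a_1,…,a_n be nonnegative integers with Σ_{i=1}^n a_i = 2d, and let μ ∈ ℝ. Consider the homogeneous polynomial f(x) = b_1 x_1^{2d} + ⋯ + b_n x_n^{2d} − μ x_1^{a_1}⋯x_n^{a_n}. Then f is a nonnegative polynomial (f(x) ≥ 0 for all x ∈ ℝ^n) if and only if f is a sums-of-squares polynomial. -/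
open MvPolynomial Finset

noncomputable section

/-!
If `μ ≤ 0` and all `aᵢ` are even (or `μ = 0`), then `-μ x^a` is a nonnegative multiple of a
square and `f` is visibly a sum of squares. Otherwise some sign vector `s ∈ {±1}ⁿ` has
`μ s^a > 0`. Nonnegativity of `f` on the line through `s` in direction `eᵢ` forces `bᵢ > 0`
whenever `aᵢ > 0`, and at `xᵢ = sᵢ / ρᵢ` with `ρᵢ = (bᵢ / aᵢ)^{1/2d}` it gives
`μ s^a ≤ 2d ∏ ρᵢ^{aᵢ}`. Hence `f = ∑ (bᵢ - t aᵢ ρᵢ^{2d}) xᵢ^{2d} + t A_a(s ρ x)` for some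
`0 ≤ t ≤ 1`, where `A_c(x) = ∑ cᵢ xᵢ^{|c|} - |c| x^c` is the AM-GM form.

By Hurwitz's theorem `A_c` is a sum of squares whenever `|c|` is even: if `c = w + w'` with
`|w| = |w'|`, then `2 A_c = A_{2w} + A_{2w'} + |c| (x^w - x^{w'})²`, and when `c = 2v` with `v`
supported on at least three indices, the split can be chosen so that `w` and `w'` both have
smaller support than `v`. This reduces to two variables, where
`p u^{p+q} + q v^{p+q} - (p+q) u^p v^q` (with `u`, `v` squares) is a sum of squares by induction
on `p` and `q`.
-/

section SumsOfSquares

variable {A : Type*} [CommRing A]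

theorem IsSumSq.pow {s : A} (hs : IsSumSq s) (n : ℕ) : IsSumSq (s ^ n) := by
  simpa using pow_mem (Subsemiring.mem_sumSq.2 hs) n

theorem IsSumSq.of_two_mul [Invertible (2 : A)] {s : A} (hs : IsSumSq (2 * s)) : IsSumSq s := by
  have h : s = (⅟2 * ⅟2 + ⅟2 * ⅟2) * (2 * s) := by
    rw [← two_mul, ← mul_assoc, ← mul_assoc, mul_invOf_self, one_mul, invOf_mul_self, one_mul]
  rw [h]
  exact ((IsSumSq.mul_self _).add (IsSumSq.mul_self _)).mul hs

variable {u v : A}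

theorem isSumSq_pow_sub_pow_mul_sub (hu : IsSumSq u) (hv : IsSumSq v) (k : ℕ) :
    IsSumSq ((u ^ k - v ^ k) * (u - v)) := by
  rw [← geom_sum₂_mul, mul_assoc]
  exact (IsSumSq.sum fun i _ => (hu.pow i).mul (hv.pow _)).mul (IsSumSq.mul_self _)

theorem isSumSq_pow_mul_pow_sub_pow_sub (hu : IsSumSq u) (hv : IsSumSq v) (p q : ℕ) :
    IsSumSq (u ^ (p + 1) * (u ^ q - v ^ q) - q * v ^ (p + q) * (u - v)) := by
  induction q with
  | zero => simp [IsSumSq.zero]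
  | succ q ih =>
    have h : u ^ (p + 1) * (u ^ (q + 1) - v ^ (q + 1)) - ↑(q + 1) * v ^ (p + (q + 1)) * (u - v) =
        v * (u ^ (p + 1) * (u ^ q - v ^ q) - q * v ^ (p + q) * (u - v)) +
          (u ^ (p + q + 1) - v ^ (p + q + 1)) * (u - v) := by
      push_cast; ring
    rw [h]
    exact (hv.mul ih).add (isSumSq_pow_sub_pow_mul_sub hu hv _)

theorem isSumSq_amgm_two (hu : IsSumSq u) (hv : IsSumSq v) (p q : ℕ) :
    IsSumSq (p * u ^ (p + q) + q * v ^ (p + q) - (p + q) * (u ^ p * v ^ q)) := by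
  induction p with
  | zero => simp [IsSumSq.zero]
  | succ p ih =>
    have h : ↑(p + 1) * u ^ (p + 1 + q) + q * v ^ (p + 1 + q) -
          (↑(p + 1) + q) * (u ^ (p + 1) * v ^ q) =
        u * (p * u ^ (p + q) + q * v ^ (p + q) - (p + q) * (u ^ p * v ^ q)) +
          (u ^ (p + 1) * (u ^ q - v ^ q) - q * v ^ (p + q) * (u - v)) := by
      push_cast; ring
    rw [h]
    exact (hu.mul ih).add (isSumSq_pow_mul_pow_sub_pow_sub hu hv p q)

end SumsOfSquares

section Splitting

variable {ι : Type*} [Fintype ι] [DecidableEq ι]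

theorem exists_le_le_sum_eq {lo hi : ι → ℕ} (hle : lo ≤ hi) {T : ℕ} (hlo : ∑ i, lo i ≤ T)
    (hhi : T ≤ ∑ i, hi i) : ∃ u, lo ≤ u ∧ u ≤ hi ∧ ∑ i, u i = T := by
  induction T, hlo using Nat.le_induction with
  | base => exact ⟨lo, le_rfl, hle, rfl⟩
  | succ T _ ih =>
    obtain ⟨u, hlo, hhi', hu⟩ := ih (by omega)
    obtain ⟨i, -, hi⟩ := exists_lt_of_sum_lt (hu.trans_lt hhi)
    refine ⟨u + Pi.single i 1, hlo.trans le_self_add, fun j => ?_, ?_⟩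
    · rcases eq_or_ne j i with rfl | hj
      · simpa using hi
      · simpa [hj] using hhi' j
    · simp [sum_add_distrib, hu]

theorem exists_add_eq_card_support_lt (c : ι → ℕ) {m : ℕ} (hc : ∑ i, c i = m + m)
    (h3 : 3 ≤ #{i | c i ≠ 0}) :
    ∃ w w' : ι → ℕ, w + w' = c ∧ ∑ i, w i = m ∧ ∑ i, w' i = m ∧
      #{i | w i ≠ 0} < #{i | c i ≠ 0} ∧ #{i | w' i ≠ 0} < #{i | c i ≠ 0} := by
  set S : Finset ι := {i | c i ≠ 0}
  -- At most one index carries more than half of the weight, so two indices `j ≠ l` of the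
  -- support carry at most half each; `w` takes all of `c l` and nothing of `c j`.
  have hbig : #{i ∈ S | m < c i} ≤ 1 := by
    refine card_le_one.2 fun j hj l hl => by_contra fun hjl => ?_
    have := add_le_sum (f := c) (s := univ) (fun _ _ => Nat.zero_le _) (mem_univ j) (mem_univ l) hjl
    simp only [mem_filter] at hj hl
    omega
  obtain ⟨j, hj, l, hl, hjl⟩ : ∃ j ∈ {i ∈ S | c i ≤ m}, ∃ l ∈ {i ∈ S | c i ≤ m}, j ≠ l := by
    refine one_lt_card.1 ?_
    have := card_filter_add_card_filter_not (s := S) (fun i => c i ≤ m)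
    simp only [not_le] at this
    omega
  simp only [mem_filter, S, mem_univ, true_and] at hj hl
  obtain ⟨w, hlo, hhi, hw⟩ := exists_le_le_sum_eq (lo := Pi.single l (c l))
    (hi := c - Pi.single j (c j)) (T := m)
    (fun i => by rcases eq_or_ne i l with rfl | h <;> simp [Pi.single_apply, *, hjl.symm])
    (by simp [hl.2]) (by
      simp only [Pi.sub_apply]
      rw [sum_tsub_distrib _ fun i _ => by rcases eq_or_ne i j with rfl | h <;> simp [*]]
      simp [hc]; omega)
  have hwc : ∀ i, w i ≤ c i := fun i => (hhi i).trans tsub_le_self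
  have hwj : w j = 0 := by simpa using hhi j
  have hwl : c l ≤ w l := by simpa using hlo l
  refine ⟨w, c - w, funext fun i => add_tsub_cancel_of_le (hwc i), hw, ?_, ?_, ?_⟩
  · simp only [Pi.sub_apply]
    rw [sum_tsub_distrib _ fun i _ => hwc i, hc, hw]
    omega
  · refine (card_le_card fun i => ?_).trans_lt (card_erase_lt_of_mem (s := S) (a := j) ?_)
    · simp only [mem_filter, mem_univ, true_and, mem_erase, S]
      exact fun hi => ⟨by rintro rfl; exact hi hwj, fun h => hi (by simpa [h] using hwc i)⟩
    · simpa [S] using hj.1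
  · refine (card_le_card fun i => ?_).trans_lt (card_erase_lt_of_mem (s := S) (a := l) ?_)
    · simp only [mem_filter, mem_univ, true_and, mem_erase, Pi.sub_apply, S]
      exact fun hi => ⟨by rintro rfl; omega, by omega⟩
    · simpa [S] using hl.1

end Splitting

section Hurwitz

variable {σ A : Type*} [Fintype σ] [CommRing A]

def amgmForm (c : σ → ℕ) (x : σ → A) : A :=
  ∑ i, (c i : A) * x i ^ (∑ j, c j) - ((∑ j, c j : ℕ) : A) * ∏ i, x i ^ c i

theorem two_mul_amgmForm_add (x : σ → A) {w w' : σ → ℕ} (h : ∑ i, w i = ∑ i, w' i) :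
    2 * amgmForm (w + w') x = amgmForm (2 • w) x + amgmForm (2 • w') x +
      ((∑ i, (w + w') i : ℕ) : A) * (∏ i, x i ^ w i - ∏ i, x i ^ w' i) ^ 2 := by
  have hN : ∑ i, (w + w') i = 2 * ∑ i, w i := by simp [sum_add_distrib, h, two_mul]
  have hN₁ : ∑ i, (2 • w) i = 2 * ∑ i, w i := by simp [mul_sum]
  have hN₂ : ∑ i, (2 • w') i = 2 * ∑ i, w i := by simp [mul_sum, h]
  have hsq : ∀ v : σ → ℕ, ∏ i, x i ^ (2 • v) i = (∏ i, x i ^ v i) ^ 2 := fun v => by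
    simp only [Pi.smul_apply, smul_eq_mul, mul_comm 2, pow_mul, prod_pow]
  simp only [amgmForm, hN, hN₁, hN₂, hsq]
  simp only [Pi.add_apply, Pi.smul_apply, smul_eq_mul, pow_add, prod_mul_distrib, Nat.cast_add,
    Nat.cast_mul, add_mul, sum_add_distrib, mul_assoc, ← mul_sum]
  ring

theorem amgmForm_eq_zero_of_card_support_le_one (x : σ → A) {c : σ → ℕ}
    (hc : #{i | c i ≠ 0} ≤ 1) : amgmForm c x = 0 := by
  by_cases hzero : ∀ i, c i = 0
  · simp [amgmForm, hzero]
  obtain ⟨j, hj⟩ := not_forall.1 hzero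
  have hsupp : ∀ i, i ≠ j → c i = 0 := fun i hij => by_contra fun hi =>
    hij (card_le_one.1 hc i (by simpa using hi) j (by simpa using hj))
  rw [amgmForm, Fintype.sum_eq_single j hsupp,
    Fintype.sum_eq_single j fun i hi => by simp [hsupp i hi], Fintype.prod_eq_single j fun i hi => by simp [hsupp i hi], sub_self]

theorem isSumSq_amgmForm_two_smul_of_pair (x : σ → A) {v : σ → ℕ} {j l : σ} (hjl : j ≠ l)
    (hv : ∀ i, i ≠ j ∧ i ≠ l → v i = 0) : IsSumSq (amgmForm (2 • v) x) := by
  have h := isSumSq_amgm_two (IsSumSq.mul_self (x j)) (IsSumSq.mul_self (x l)) (v j) (v l)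
  have hform : amgmForm (2 • v) x = 2 * ((v j : A) * (x j * x j) ^ (v j + v l) +
      v l * (x l * x l) ^ (v j + v l) - (v j + v l) * ((x j * x j) ^ v j * (x l * x l) ^ v l)) := by
    simp only [amgmForm, Pi.smul_apply, smul_eq_mul]
    rw [Fintype.sum_eq_add j l hjl fun i hi => by simp [hv i hi],
      Fintype.sum_eq_add j l hjl fun i hi => by simp [hv i hi],
      Fintype.prod_eq_mul j l hjl fun i hi => by simp [hv i hi]]
    push_cast
    ring
  rw [hform, two_mul]
  exact h.add h

theorem isSumSq_amgmForm_two_smul [Invertible (2 : A)] (x : σ → A) (v : σ → ℕ) :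
    IsSumSq (amgmForm (2 • v) x) := by
  classical
  induction hk : #{i | v i ≠ 0} using Nat.strong_induction_on generalizing v with
  | _ k ih =>
    have hsupp : #{i | (2 • v) i ≠ 0} = k := by simpa using hk
    rcases lt_or_ge k 3 with hk3 | hk3
    · obtain hk | hk : k ≤ 1 ∨ k = 2 := by omega
      · rw [amgmForm_eq_zero_of_card_support_le_one x (hsupp.trans_le hk)]
        exact IsSumSq.zero
      · obtain ⟨j, l, hjl, hS⟩ := card_eq_two.1 (hk ▸ hsupp)
        refine isSumSq_amgmForm_two_smul_of_pair x hjl fun i hi => ?_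
        by_contra hvi
        have hmem : i ∈ ({j, l} : Finset σ) := hS ▸ by simpa using hvi
        simp [hi.1, hi.2] at hmem
    · obtain ⟨w, w', hvw, hw, hw', hcw, hcw'⟩ :=
        exists_add_eq_card_support_lt (2 • v) (m := ∑ i, v i) (by simp [sum_add_distrib, two_mul])
          (hsupp ▸ hk3)
      refine IsSumSq.of_two_mul ?_
      rw [← hvw, two_mul_amgmForm_add x (hw.trans hw'.symm)]
      exact ((ih _ (hsupp ▸ hcw) w rfl).add (ih _ (hsupp ▸ hcw') w' rfl)).add
        ((IsSumSq.natCast _).mul (IsSquare.sq _).isSumSq)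

theorem isSumSq_amgmForm [Invertible (2 : A)] (x : σ → A) {c : σ → ℕ} (hc : Even (∑ i, c i)) :
    IsSumSq (amgmForm c x) := by
  classical
  obtain ⟨m, hm⟩ := hc
  obtain ⟨w, -, hwc, hw⟩ := exists_le_le_sum_eq (zero_le : 0 ≤ c) (T := m) (by simp) (by omega)
  have hc : w + (c - w) = c := funext fun i => add_tsub_cancel_of_le (hwc i)
  have hw' : ∑ i, (c - w) i = m := by
    simp only [Pi.sub_apply]
    rw [sum_tsub_distrib _ fun i _ => hwc i, hm, hw]
    omega
  refine IsSumSq.of_two_mul ?_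
  rw [← hc, two_mul_amgmForm_add x (hw.trans hw'.symm)]
  exact ((isSumSq_amgmForm_two_smul x w).add (isSumSq_amgmForm_two_smul x _)).add
    ((IsSumSq.natCast _).mul (IsSquare.sq _).isSumSq)

end Hurwitz

section RealPolynomial

variable {σ : Type*}

theorem isSumSq_C {r : ℝ} (hr : 0 ≤ r) : IsSumSq (C r : MvPolynomial σ ℝ) := by
  rw [← Real.mul_self_sqrt hr, C_mul]
  exact IsSumSq.mul_self _

theorem IsSOSPoly.of_isSumSq {p : MvPolynomial σ ℝ} (h : IsSumSq p) : IsSOSPoly p := by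
  induction h with
  | zero => exact ⟨0, ![], by simp⟩
  | sq_add a _ ih =>
    obtain ⟨r, q, hq⟩ := ih
    exact ⟨r + 1, Fin.cons a q, by simp [Fin.sum_univ_succ, hq, sq]⟩

theorem IsSOSPoly.eval_nonneg {p : MvPolynomial σ ℝ} (h : IsSOSPoly p) (x : σ → ℝ) :
    0 ≤ eval x p := by
  obtain ⟨r, q, rfl⟩ := h
  simp only [map_sum, map_pow]
  positivity

variable [Fintype σ] {b : σ → ℝ} {a : σ → ℕ} {d : ℕ}

theorem isSumSq_sum_C_mul_X_pow (hb : ∀ i, 0 ≤ b i) :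
    IsSumSq (∑ i, C (b i) * X i ^ (2 * d)) :=
  IsSumSq.sum fun i _ => (isSumSq_C (hb i)).mul (by rw [pow_mul']; exact (IsSquare.sq _).isSumSq)

theorem isSumSq_neg_C_mul_prod_X_pow {μ : ℝ}
    (h : ∀ s : σ → ℝ, (∀ i, s i ^ 2 = 1) → μ * ∏ i, s i ^ a i ≤ 0) :
    IsSumSq (-(C μ * ∏ i, X i ^ a i)) := by
  classical
  have hμ : μ ≤ 0 := by simpa using h 1 (by simp)
  rcases hμ.eq_or_lt with rfl | hμ
  · simp [IsSumSq.zero]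
  have hev : ∀ j, Even (a j) := fun j => by
    by_contra hodd
    have := h (fun i => if i = j then -1 else 1) (fun i => by split_ifs <;> norm_num)
    simp [ite_pow, (Nat.not_even_iff_odd.1 hodd).neg_one_pow] at this
    linarith
  choose k hk using hev
  have hsq : ∏ i, X i ^ a i = (∏ i, X i ^ k i : MvPolynomial σ ℝ) ^ 2 := by
    simp only [hk, ← two_mul, pow_mul', prod_pow]
  rw [hsq, ← neg_mul, ← map_neg]
  exact (isSumSq_C (by linarith)).mul (IsSquare.sq _).isSumSq

theorem isSumSq_of_amgm_certificate (ha : ∑ i, a i = 2 * d) {μ t : ℝ} (r : σ → ℝ) (ht : 0 ≤ t)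
    (hle : ∀ i, t * (a i * r i ^ (2 * d)) ≤ b i) (hμ : t * (2 * d * ∏ i, r i ^ a i) = μ) :
    IsSumSq (∑ i, C (b i) * X i ^ (2 * d) - C μ * ∏ i, X i ^ a i) := by
  let : Invertible (2 : ℝ) := invertibleOfNonzero two_ne_zero
  let : Invertible (2 : MvPolynomial σ ℝ) := (Invertible.map C (2 : ℝ)).copy 2 (map_ofNat C 2).symm
  have hform : amgmForm a (fun i => C (r i) * X i) =
      ∑ i, C (a i * r i ^ (2 * d)) * X i ^ (2 * d) -
        C (2 * d * ∏ i, r i ^ a i) * ∏ i, X i ^ a i := by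
    simp only [amgmForm, ha, mul_pow, prod_mul_distrib, ← map_pow, ← map_prod, map_mul, map_natCast,
      Nat.cast_mul, Nat.cast_ofNat, map_ofNat, mul_assoc]
  have hf : ∑ i, C (b i) * X i ^ (2 * d) - C μ * ∏ i, X i ^ a i =
      ∑ i, C (b i - t * (a i * r i ^ (2 * d))) * X i ^ (2 * d) +
        C t * amgmForm a (fun i => C (r i) * X i) := by
    rw [hform, ← hμ]
    simp only [map_sub, map_mul, sub_mul, sum_sub_distrib, mul_sub, mul_sum, mul_assoc]
    ring
  rw [hf]
  exact (isSumSq_sum_C_mul_X_pow fun i => sub_nonneg.2 (hle i)).add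
    ((isSumSq_C ht).mul (isSumSq_amgmForm _ ⟨d, by rw [ha, two_mul]⟩))

theorem pos_of_forall_sum_sub_prod_nonneg {E : ℝ} (hb : ∀ i, 0 ≤ b i) (hE : 0 < E)
    (hg : ∀ y : σ → ℝ, 0 ≤ ∑ i, b i * y i ^ (2 * d) - E * ∏ i, y i ^ a i) {i : σ}
    (hai : a i ≠ 0) : 0 < b i := by
  classical
  refine (hb i).lt_of_ne' fun hbi => ?_
  set R := max 1 ((∑ j, b j + 1) / E)
  have h := hg fun j => if j = i then R else 1
  have hsum : ∑ j, b j * (if j = i then R else 1) ^ (2 * d) = ∑ j, b j :=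
    sum_congr rfl fun j _ => by split_ifs with hj <;> simp [hj, hbi]
  have hprod : ∏ j, (if j = i then R else 1) ^ a j = R ^ a i := by simp [ite_pow]
  rw [hsum, hprod] at h
  have hR : R ≤ R ^ a i := le_self_pow₀ (le_max_left _ _) hai
  have hRE := (div_le_iff₀ hE).1 (le_max_right 1 ((∑ j, b j + 1) / E))
  nlinarith

theorem exists_amgm_certificate {E : ℝ} (hd : d ≠ 0) (ha : ∑ i, a i = 2 * d)
    (hb : ∀ i, 0 ≤ b i) (hE : 0 < E)
    (hg : ∀ y : σ → ℝ, 0 ≤ ∑ i, b i * y i ^ (2 * d) - E * ∏ i, y i ^ a i) :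
    ∃ ρ : σ → ℝ, ∃ t : ℝ, 0 ≤ t ∧ (∀ i, t * (a i * ρ i ^ (2 * d)) ≤ b i) ∧
      t * (2 * d * ∏ i, ρ i ^ a i) = E := by
  have hpos i := pos_of_forall_sum_sub_prod_nonneg (i := i) hb hE hg
  -- Where `a i = 0`, both `b i / a i` and `ρ i` are junk zeros; `ρ i` only enters as `ρ i ^ a i`.
  set ρ : σ → ℝ := fun i => (b i / a i) ^ ((2 * d : ℕ) : ℝ)⁻¹
  have hρ i : ρ i ^ (2 * d) = b i / a i :=
    Real.rpow_inv_natCast_pow (div_nonneg (hb i) (Nat.cast_nonneg _)) (by omega)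
  set P := ∏ i, ρ i ^ a i
  have hP : 0 < P := prod_pos fun i _ => by
    rcases eq_or_ne (a i) 0 with h | h
    · simp [h]
    · exact pow_pos (Real.rpow_pos_of_pos (div_pos (hpos i h) (by positivity)) _) _
  have hEP : E ≤ 2 * d * P := by
    have h := hg fun i => (ρ i)⁻¹
    have hsum : ∑ i, b i * (ρ i)⁻¹ ^ (2 * d) = 2 * d := by
      rw [show (2 * d : ℝ) = ∑ i, (a i : ℝ) by exact_mod_cast ha.symm]
      refine sum_congr rfl fun i _ => ?_
      rw [inv_pow, hρ]
      rcases eq_or_ne (a i) 0 with h | h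
      · simp [h]
      · field_simp [(hpos i h).ne']
    have hprod : ∏ i, (ρ i)⁻¹ ^ a i = P⁻¹ := by simp [P, inv_pow, prod_inv_distrib]
    rw [hsum, hprod, sub_nonneg, ← div_eq_mul_inv, div_le_iff₀ hP] at h
    exact h
  have h2dP : 0 < 2 * d * P := mul_pos (by positivity) hP
  refine ⟨ρ, E / (2 * d * P), by positivity, fun i => ?_, div_mul_cancel₀ E h2dP.ne'⟩
  rw [hρ]
  rcases eq_or_ne (a i) 0 with h | h
  · simp [h, hb i]
  · rw [mul_div_cancel₀ _ (Nat.cast_ne_zero.2 h)]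
    exact mul_le_of_le_one_left (hb i) ((div_le_one h2dP).2 hEP)

theorem isSumSq_of_forall_nonneg_of_sign {μ : ℝ} (hd : d ≠ 0) (ha : ∑ i, a i = 2 * d)
    (hb : ∀ i, 0 ≤ b i) (hf : ∀ x : σ → ℝ, 0 ≤ ∑ i, b i * x i ^ (2 * d) - μ * ∏ i, x i ^ a i)
    {s : σ → ℝ} (hs : ∀ i, s i ^ 2 = 1) (hμs : 0 < μ * ∏ i, s i ^ a i) :
    IsSumSq (∑ i, C (b i) * X i ^ (2 * d) - C μ * ∏ i, X i ^ a i) := by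
  have hs2d i : s i ^ (2 * d) = 1 := by rw [pow_mul, hs, one_pow]
  have hss : (∏ i, s i ^ a i) ^ 2 = 1 := by
    rw [← prod_pow]
    exact prod_eq_one fun i _ => by rw [← pow_mul, mul_comm, pow_mul, hs, one_pow]
  obtain ⟨ρ, t, ht, hle, hE⟩ := exists_amgm_certificate hd ha hb hμs fun y => by
    simpa [mul_pow, hs2d, prod_mul_distrib, mul_assoc] using hf (s * y)
  refine isSumSq_of_amgm_certificate ha (s * ρ) ht
    (fun i => by simpa [mul_pow, hs2d] using hle i) ?_
  calc t * (2 * d * ∏ i, (s * ρ) i ^ a i) = t * (2 * d * ∏ i, ρ i ^ a i) * ∏ i, s i ^ a i := by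
        simp only [Pi.mul_apply, mul_pow, prod_mul_distrib]; ring
    _ = μ := by rw [hE, mul_assoc, ← sq, hss, mul_one]

end RealPolynomial

/-- Lemma 3.1 (Fidalgo–Kovacec): for `b_i ≥ 0`, `a_i ∈ ℕ` with `∑ a_i = 2d`, the polynomial
`f = ∑ b_i x_i^{2d} − μ x_1^{a_1}⋯x_n^{a_n}` is nonnegative iff it is a sum of squares. -/
theorem lemma31 (n d : ℕ) (b : Fin n → ℝ) (hb : ∀ i, 0 ≤ b i)
    (a : Fin n → ℕ) (ha : ∑ i, a i = 2 * d) (μ : ℝ) :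
    (∀ x : Fin n → ℝ, 0 ≤ MvPolynomial.eval x
        ((∑ i, MvPolynomial.C (b i) * MvPolynomial.X i ^ (2 * d))
          - MvPolynomial.C μ * ∏ i, MvPolynomial.X i ^ (a i))) ↔
    IsSOSPoly ((∑ i, MvPolynomial.C (b i) * MvPolynomial.X i ^ (2 * d))
          - MvPolynomial.C μ * ∏ i, MvPolynomial.X i ^ (a i)) := by
  refine ⟨fun hf => IsSOSPoly.of_isSumSq ?_, fun h x => h.eval_nonneg x⟩
  simp only [map_sub, map_sum, map_mul, map_pow, map_prod, eval_C, eval_X] at hf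
  by_cases hsign : ∀ s : Fin n → ℝ, (∀ i, s i ^ 2 = 1) → μ * ∏ i, s i ^ a i ≤ 0
  · rw [sub_eq_add_neg]
    exact (isSumSq_sum_C_mul_X_pow hb).add (isSumSq_neg_C_mul_prod_X_pow hsign)
  push Not at hsign
  obtain ⟨s, hs, hμs⟩ := hsign
  rcases eq_or_ne d 0 with rfl | hd
  · have ha0 : ∀ i, a i = 0 := by simpa using ha
    have hconst : ∑ i, C (b i) * X i ^ (2 * 0) - C μ * ∏ i, X i ^ a i =
        (C (∑ i, b i - μ) : MvPolynomial (Fin n) ℝ) := by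
      simp [ha0]
    rw [hconst]
    exact isSumSq_C (by simpa [ha0] using hf 0)
  exact isSumSq_of_forall_nonneg_of_sign hd ha hb hf hs hμs
end
end

section
/- Let G = (V, E) be an m-uniform hyper-star. Then the Laplacian tensor ℒ of G is a symmetric W-tensor. -/
open MvPolynomial Finset

noncomputable section

/-- The adjacency tensor of an `m`-uniform hypergraph with edge set `E`:
entry `1/(m−1)!` at tuples whose underlying vertex set is an edge, `0` otherwise. -/
def adjT (m n : ℕ) (E : Finset (Finset (Fin n))) : (Fin m → Fin n) → ℝ :=
  fun g => if Finset.image g Finset.univ ∈ E then 1 / (Nat.factorial (m - 1) : ℝ) else 0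

/-- The degree of a vertex: the number of edges containing it. -/
def degT {n : ℕ} (E : Finset (Finset (Fin n))) (i : Fin n) : ℕ :=
  (E.filter fun e => i ∈ e).card

/-- The Laplacian tensor `ℒ = 𝒟 − 𝒜` of a hypergraph. -/
def lapT (m n : ℕ) (E : Finset (Finset (Fin n))) : (Fin m → Fin n) → ℝ :=
  fun g => (∑ i : Fin n, if g = Function.const (Fin m) i then (degT E i : ℝ) else 0)
    - adjT m n E g


section Aux

variable {m n : ℕ}

private lemma image_comp_perm (g : Fin m → Fin n) (σ : Equiv.Perm (Fin m)) :
    Finset.image (g ∘ σ) Finset.univ = Finset.image g Finset.univ := by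
  ext a
  simp only [Finset.mem_image, Finset.mem_univ, true_and, Function.comp_apply]
  constructor
  · rintro ⟨j, rfl⟩; exact ⟨σ j, rfl⟩
  · rintro ⟨j, rfl⟩; exact ⟨σ.symm j, by simp⟩

private lemma comp_perm_eq_const (g : Fin m → Fin n) (σ : Equiv.Perm (Fin m)) (i : Fin n) :
    g ∘ σ = Function.const (Fin m) i ↔ g = Function.const (Fin m) i := by
  constructor
  · intro h; funext j
    have := congrFun h (σ.symm j); simpa using this
  · intro h; funext j; simp [h]

private lemma lapT_symm (E : Finset (Finset (Fin n))) : IsSymT (lapT m n E) := by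
  intro σ g
  unfold lapT adjT
  rw [image_comp_perm]
  congr 1
  refine Finset.sum_congr rfl fun i _ => ?_
  simp only [comp_perm_eq_const]

private lemma lapT_singleton_vanish (e : Finset (Fin n)) (g : Fin m → Fin n)
    (h : ∃ j, g j ∉ e) : lapT m n {e} g = 0 := by
  obtain ⟨j, hj⟩ := h
  unfold lapT adjT degT
  have h1 : ∀ i : Fin n,
      (if g = Function.const (Fin m) i
        then ((({e} : Finset (Finset (Fin n))).filter fun f => i ∈ f).card : ℝ) else 0) = 0 := by
    intro i
    split_ifs with h
    · have hi : i ∉ e := by rw [h] at hj; exact hj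
      simp [Finset.filter_singleton, hi]
    · rfl
  rw [Finset.sum_congr rfl fun i _ => h1 i]
  simp only [Finset.sum_const_zero, zero_sub, neg_eq_zero]
  rw [if_neg]
  intro hmem
  rw [Finset.mem_singleton] at hmem
  exact hj (hmem ▸ Finset.mem_image_of_mem g (Finset.mem_univ j))

private lemma tmul_eq_subTmul (Γ : Finset (Fin n)) (f : (Fin m → Fin n) → ℝ)
    (h0 : ∀ g : Fin m → Fin n, (∃ j, g j ∉ Γ) → f g = 0) (x : Fin n → ℝ) :
    tmul f x = subTmul Γ (fun g => f (fun j => (g j).1)) x := by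
  classical
  have hinj : ∀ a ∈ (Finset.univ : Finset (Fin m → Γ)), ∀ b ∈ (Finset.univ : Finset (Fin m → Γ)),
      (fun j => ((a j : Fin n))) = (fun j => ((b j : Fin n))) → a = b := by
    intro a _ b _ hab
    funext j
    exact Subtype.ext (congrFun hab j)
  have key : subTmul Γ (fun g => f (fun j => (g j).1)) x
      = ∑ h ∈ Finset.image (fun (g : Fin m → Γ) (j : Fin m) => (g j).1) Finset.univ,
          f h * ∏ j, x (h j) := by
    rw [Finset.sum_image hinj]
    rfl
  rw [key]
  refine (Finset.sum_subset (Finset.subset_univ _) ?_).symm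
  intro h _ hnot
  have : ∃ j, h j ∉ Γ := by
    by_contra hc
    push_neg at hc
    exact hnot (Finset.mem_image.mpr ⟨fun j => ⟨h j, hc j⟩, Finset.mem_univ _, rfl⟩)
  rw [h0 h this, zero_mul]

private lemma degT_split {s : ℕ} (E : Finset (Finset (Fin n)))
    (e : Fin s → Finset (Fin n)) (he : Function.Injective e)
    (hE : E = Finset.image e Finset.univ) (i : Fin n) :
    (degT E i : ℝ) = ∑ l, (degT {e l} i : ℝ) := by
  have h1 : ∀ l, degT {e l} i = if i ∈ e l then 1 else 0 := by
    intro l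
    unfold degT
    rw [Finset.filter_singleton]
    split_ifs <;> simp
  have h2 : degT E i = ∑ l, degT {e l} i := by
    unfold degT
    rw [hE, Finset.filter_image, Finset.card_image_of_injective _ he,
      Finset.card_filter]
    unfold degT at h1
    exact Finset.sum_congr rfl fun l _ => (h1 l).symm
  rw [h2]
  push_cast
  rfl

private lemma adjT_split {s : ℕ} (E : Finset (Finset (Fin n)))
    (e : Fin s → Finset (Fin n)) (he : Function.Injective e)
    (hE : E = Finset.image e Finset.univ) (g : Fin m → Fin n) :
    adjT m n E g = ∑ l, adjT m n {e l} g := by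
  unfold adjT
  simp only [Finset.mem_singleton]
  by_cases hmem : Finset.image g Finset.univ ∈ E
  · rw [if_pos hmem]
    rw [hE, Finset.mem_image] at hmem
    obtain ⟨l0, -, hl0⟩ := hmem
    rw [Finset.sum_eq_single l0]
    · rw [if_pos hl0.symm]
    · intro l _ hne
      rw [if_neg]
      intro h
      exact hne (he (hl0.trans h)).symm
    · intro h; exact absurd (Finset.mem_univ l0) h
  · rw [if_neg hmem]
    refine (Finset.sum_eq_zero fun l _ => ?_).symm
    rw [if_neg]
    intro h
    exact hmem (hE ▸ (h ▸ Finset.mem_image_of_mem e (Finset.mem_univ l)))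

private lemma lapT_split {s : ℕ} (E : Finset (Finset (Fin n)))
    (e : Fin s → Finset (Fin n)) (he : Function.Injective e)
    (hE : E = Finset.image e Finset.univ) (g : Fin m → Fin n) :
    lapT m n E g = ∑ l, lapT m n {e l} g := by
  unfold lapT
  rw [Finset.sum_sub_distrib, adjT_split E e he hE g]
  congr 1
  rw [Finset.sum_comm]
  refine Finset.sum_congr rfl fun i _ => ?_
  rw [degT_split E e he hE i]
  split_ifs with h
  · rfl
  · simp

private lemma tmul_sum {s : ℕ} (F : Fin s → (Fin m → Fin n) → ℝ) (x : Fin n → ℝ) :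
    tmul (fun g => ∑ l, F l g) x = ∑ l, tmul (F l) x := by
  unfold tmul
  simp_rw [Finset.sum_mul]
  rw [Finset.sum_comm]

private lemma wcond_edge (hm : 2 ≤ m) (e : Finset (Fin n)) (hcard : e.card = m) :
    WCondIII (fun g : Fin m → e => lapT m n {e} (fun j => (g j).1)) := by
  classical
  left
  have hcard' : Fintype.card e = m := by simpa using hcard
  have eb : Fin m ≃ e := (Fintype.equivFinOfCardEq hcard').symm
  refine ⟨⇑eb, ?_, ?_⟩
  · intro hall
    have h01 : (⟨0, by omega⟩ : Fin m) ≠ ⟨1, by omega⟩ := by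
      intro h; simpa using congrArg Fin.val h
    exact h01 (eb.injective (hall _ _))
  · intro g hg hnot
    show lapT m n {e} (fun j => ((g j : Fin n))) = 0
    unfold lapT adjT
    have diag0 : ∀ i : Fin n,
        (if (fun j => ((g j : Fin n))) = Function.const (Fin m) i
          then ((degT {e} i : ℝ)) else 0) = 0 := by
      intro i
      rw [if_neg]
      intro h
      refine hg fun j j' => Subtype.ext ?_
      rw [congrFun h j, congrFun h j']
      rfl
    rw [Finset.sum_congr rfl fun i _ => diag0 i]
    simp only [Finset.sum_const_zero, zero_sub, neg_eq_zero]
    rw [if_neg]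
    intro himg
    rw [Finset.mem_singleton] at himg
    have hsurj : Function.Surjective g := by
      rintro ⟨a, ha⟩
      have : a ∈ Finset.image (fun j => ((g j : Fin n))) Finset.univ := by
        rw [himg]; exact ha
      obtain ⟨j, -, hj⟩ := Finset.mem_image.mp this
      exact ⟨j, Subtype.ext hj⟩
    have hbij : Function.Bijective g := by
      rw [Fintype.bijective_iff_surjective_and_card]
      exact ⟨hsurj, by simp [hcard']⟩
    refine hnot ((Equiv.ofBijective g hbij).trans eb.symm) ?_
    funext j
    simp [Equiv.ofBijective]

end Aux

/-- Theorem 4.1: the Laplacian tensor of an `m`-uniform hyper-star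
(vertex partition `V = {v₀} ∪ V_1 ∪ ⋯ ∪ V_s` with `|V_i| = m − 1` and
edges `{v₀} ∪ V_i`) is a symmetric W-tensor. -/
theorem theorem41 (m n : ℕ) (hm : 2 ≤ m)
    (E : Finset (Finset (Fin n)))
    (s : ℕ) (v0 : Fin n) (V : Fin s → Finset (Fin n))
    (hv0 : ∀ i, v0 ∉ V i)
    (hdisj : ∀ i j, i ≠ j → Disjoint (V i) (V j))
    (hcard : ∀ i, (V i).card = m - 1)
    (hpart : insert v0 (Finset.univ.biUnion V) = Finset.univ)
    (hE : E = Finset.image (fun i => insert v0 (V i)) Finset.univ) :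
    IsSymT (lapT m n E) ∧ IsWTensor (lapT m n E) := by
  constructor
  · exact lapT_symm E
  · rcases Nat.eq_zero_or_pos s with hs | hs
    · -- degenerate case: no edges
      subst hs
      have hE0 : E = ∅ := by
        rw [hE]
        simp
      refine ⟨1, fun _ => Finset.univ, fun _ _ => 0, one_pos, v0.pos, ?_, ?_, ?_, ?_, ?_⟩
      · intro a b _; exact Subsingleton.elim a b
      · simp
      · intro p hp
        have : (p : ℕ) = 0 := by omega
        omega
      · intro x
        simp [subTmul, tmul, lapT, adjT, degT, hE0]
      · intro l
        right
        intro g _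
        exact le_refl 0
    · -- main case
      set e : Fin s → Finset (Fin n) := fun l => insert v0 (V l) with he_def
      have hecard : ∀ l, (e l).card = m := by
        intro l
        rw [he_def]
        rw [Finset.card_insert_of_notMem (hv0 l), hcard l]
        omega
      have he_inj : Function.Injective e := by
        intro a b hab
        by_contra hne
        have hVa : (V a).Nonempty := by
          rw [← Finset.card_pos, hcard a]; omega
        obtain ⟨y, hy⟩ := hVa
        have hyv0 : y ≠ v0 := fun h => hv0 a (h ▸ hy)
        have : y ∈ e b := hab ▸ Finset.mem_insert_of_mem hy
        have hyb : y ∈ V b := (Finset.mem_insert.mp this).resolve_left hyv0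
        exact (Finset.disjoint_left.mp (hdisj a b hne) hy) hyb
      have hsn : s ≤ n := by
        have hv0U : v0 ∉ Finset.univ.biUnion V := by
          rw [Finset.mem_biUnion]
          rintro ⟨i, -, hi⟩
          exact hv0 i hi
        have hcardU : (Finset.univ.biUnion V).card = s * (m - 1) := by
          rw [Finset.card_biUnion (fun i _ j _ hij => hdisj i j hij)]
          simp [hcard, Finset.sum_const, mul_comm]
        have hn : n = s * (m - 1) + 1 := by
          have hcu := congrArg Finset.card hpart
          rw [Finset.card_insert_of_notMem hv0U, hcardU, Finset.card_univ,
            Fintype.card_fin] at hcu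
          omega
        have h1 : 1 ≤ m - 1 := by omega
        have := Nat.mul_le_mul_left s h1
        omega
      refine ⟨s, e, fun l (g : Fin m → e l) => lapT m n {e l} (fun j => (g j).1),
        hs, hsn, he_inj, ?_, ?_, ?_, ?_⟩
      · -- biUnion = univ
        have hb : Finset.univ.biUnion e = insert v0 (Finset.univ.biUnion V) := by
          ext a
          simp only [Finset.mem_biUnion, Finset.mem_insert, Finset.mem_univ, true_and,
            he_def]
          constructor
          · rintro ⟨l, h | h⟩
            · exact Or.inl h
            · exact Or.inr ⟨l, h⟩
          · rintro (rfl | ⟨l, h⟩)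
            · exact ⟨⟨0, hs⟩, Or.inl rfl⟩
            · exact ⟨l, Or.inr h⟩
        rw [hb, hpart]
      · -- WCondI
        intro p hp
        have hsub : (((Finset.univ.filter fun l => l < p).biUnion e) ∩ e p) ⊆ {v0} := by
          intro a ha
          rw [Finset.mem_inter] at ha
          obtain ⟨ha1, ha2⟩ := ha
          rw [Finset.mem_biUnion] at ha1
          obtain ⟨l, hl, hal⟩ := ha1
          rw [Finset.mem_filter] at hl
          rw [Finset.mem_singleton]
          by_contra hne
          have h1 : a ∈ V l := (Finset.mem_insert.mp hal).resolve_left hne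
          have h2 : a ∈ V p := (Finset.mem_insert.mp ha2).resolve_left hne
          exact (Finset.disjoint_left.mp (hdisj l p (ne_of_lt hl.2)) h1) h2
        calc (((Finset.univ.filter fun l => l < p).biUnion e) ∩ e p).card
            ≤ ({v0} : Finset (Fin n)).card := Finset.card_le_card hsub
          _ = 1 := Finset.card_singleton v0
      · -- decomposition
        intro x
        have hEe : E = Finset.image e Finset.univ := hE
        calc tmul (lapT m n E) x
            = tmul (fun g => ∑ l, lapT m n {e l} g) x := by
              unfold tmul
              exact Finset.sum_congr rfl fun g _ => by
                rw [lapT_split E e he_inj hEe g]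
          _ = ∑ l, tmul (lapT m n {e l}) x := tmul_sum _ x
          _ = ∑ l, subTmul (e l) (fun g => lapT m n {e l} (fun j => (g j).1)) x := by
              refine Finset.sum_congr rfl fun l _ => ?_
              exact tmul_eq_subTmul (e l) (lapT m n {e l})
                (fun g h => lapT_singleton_vanish (e l) g h) x
      · -- WCondIII
        intro l
        exact wcond_edge hm (e l) (hecard l)

end
end

section
/- Let m be an even positive integer and let k, j be positive integers. Let f_1 be a homogeneous real polynomial of degree m in the variables (y_1,…,y_k, t) and let f_2 be a homogeneous real polynomial of degree m in the variables (t, z_1,…,z_j). Suppose f_1(y, t) + f_2(t, z) ≥ 0 for all (y, t, z) ∈ ℝ^k × ℝ × ℝ^j. Then there exists ρ ∈ ℝ such that f_1(y, t) − ρ t^m ≥ 0 for all (y, t) ∈ ℝ^k × ℝ, and f_2(t, z) + ρ t^m ≥ 0 for all (t, z) ∈ ℝ × ℝ^j. -/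
open MvPolynomial Finset

noncomputable section

lemma eval_smul_of_homog {n m : ℕ} {φ : MvPolynomial (Fin n) ℝ} (h : φ.IsHomogeneous m)
    (c : ℝ) (x : Fin n → ℝ) :
    MvPolynomial.eval (fun i => c * x i) φ = c ^ m * MvPolynomial.eval x φ := by
  rw [eval_eq', eval_eq', Finset.mul_sum]
  apply Finset.sum_congr rfl
  intro d hd
  have hdeg : ∑ i, d i = m := by
    have h1 := h (MvPolynomial.mem_support_iff.mp hd)
    rw [Finsupp.weight_apply] at h1
    simp only [Finsupp.sum, Pi.one_apply, smul_eq_mul, mul_one] at h1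
    rw [← h1]
    exact (Finset.sum_subset (Finset.subset_univ _)
      (fun i _ hi => Finsupp.notMem_support_iff.mp hi)).symm
  simp_rw [mul_pow, Finset.prod_mul_distrib, Finset.prod_pow_eq_pow_sum, hdeg]
  ring

lemma eval_zero_of_homog {n m : ℕ} {φ : MvPolynomial (Fin n) ℝ} (h : φ.IsHomogeneous m)
    (hm : 0 < m) : MvPolynomial.eval (fun _ => (0 : ℝ)) φ = 0 := by
  rw [eval_zero']
  exact h.coeff_eq_zero (by simp [Finsupp.degree]; omega)

/-- Splitting step in the proof of Theorem 3.1: if `f₁(y,t)` and `f₂(t,z)` are homogeneous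
of even degree `m` and `f₁(y,t) + f₂(t,z) ≥ 0` everywhere, then there is `ρ ∈ ℝ` with
`f₁(y,t) − ρ t^m ≥ 0` and `f₂(t,z) + ρ t^m ≥ 0` everywhere. -/
theorem split_nonneg (m k j : ℕ) (hm : Even m) (hmpos : 0 < m)
    (hk : 0 < k) (hj : 0 < j)
    (f1 : MvPolynomial (Fin (k + 1)) ℝ) (hf1 : f1.IsHomogeneous m)
    (f2 : MvPolynomial (Fin (j + 1)) ℝ) (hf2 : f2.IsHomogeneous m)
    (hnn : ∀ (y : Fin k → ℝ) (t : ℝ) (z : Fin j → ℝ),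
      0 ≤ MvPolynomial.eval (Fin.snoc y t) f1 + MvPolynomial.eval (Fin.cons t z) f2) :
    ∃ ρ : ℝ,
      (∀ (y : Fin k → ℝ) (t : ℝ), 0 ≤ MvPolynomial.eval (Fin.snoc y t) f1 - ρ * t ^ m) ∧
      (∀ (t : ℝ) (z : Fin j → ℝ), 0 ≤ MvPolynomial.eval (Fin.cons t z) f2 + ρ * t ^ m) := by
  set S : Set ℝ := Set.range (fun z : Fin j → ℝ => -MvPolynomial.eval (Fin.cons 1 z) f2) with hS
  have hne : S.Nonempty := ⟨_, Set.mem_range_self 0⟩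
  have hub : ∀ y : Fin k → ℝ, MvPolynomial.eval (Fin.snoc y 1) f1 ∈ upperBounds S := by
    rintro y _ ⟨z, rfl⟩
    have := hnn y 1 z
    dsimp only
    linarith
  have hbdd : BddAbove S := ⟨_, hub 0⟩
  refine ⟨sSup S, ?_, ?_⟩
  · -- f1 part
    intro y t
    rcases eq_or_ne t 0 with rfl | ht
    · have hz : MvPolynomial.eval (Fin.cons (0:ℝ) (0 : Fin j → ℝ)) f2 = 0 := by
        have : (Fin.cons (0:ℝ) (0 : Fin j → ℝ)) = fun _ => (0:ℝ) := by
          ext i; refine Fin.cases ?_ ?_ i <;> simp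
        rw [this, eval_zero_of_homog hf2 hmpos]
      have h0 := hnn y 0 0
      rw [hz] at h0
      rw [zero_pow hmpos.ne']
      linarith
    · have htm : 0 < t ^ m := hm.pow_pos ht
      have hx : (Fin.snoc y t : Fin (k+1) → ℝ)
          = fun i => t * (Fin.snoc (fun i' => y i' / t) 1 : Fin (k+1) → ℝ) i := by
        ext i
        refine Fin.lastCases ?_ ?_ i
        · simp
        · intro i'; simp [mul_div_cancel₀ _ ht]
      have hkey : sSup S ≤ MvPolynomial.eval (Fin.snoc (fun i' => y i' / t) 1) f1 :=
        csSup_le hne (fun _ hb => (hub _) hb)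
      have := eval_smul_of_homog hf1 t (Fin.snoc (fun i' => y i' / t) 1)
      rw [← hx] at this
      rw [this]
      nlinarith
  · -- f2 part
    intro t z
    rcases eq_or_ne t 0 with rfl | ht
    · have hz : MvPolynomial.eval (Fin.snoc (0 : Fin k → ℝ) (0:ℝ)) f1 = 0 := by
        have : (Fin.snoc (0 : Fin k → ℝ) (0:ℝ)) = fun _ => (0:ℝ) := by
          ext i; refine Fin.lastCases ?_ ?_ i <;> simp
        rw [this, eval_zero_of_homog hf1 hmpos]
      have h0 := hnn 0 0 z
      rw [hz] at h0
      rw [zero_pow hmpos.ne']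
      linarith
    · have htm : 0 < t ^ m := hm.pow_pos ht
      have hx : (Fin.cons t z : Fin (j+1) → ℝ)
          = fun i => t * (Fin.cons 1 (fun i' => z i' / t) : Fin (j+1) → ℝ) i := by
        ext i
        refine Fin.cases ?_ ?_ i
        · simp
        · intro i'; simp [mul_div_cancel₀ _ ht]
      have hkey : -MvPolynomial.eval (Fin.cons 1 (fun i' => z i' / t)) f2 ≤ sSup S :=
        le_csSup hbdd (Set.mem_range_self _)
      have := eval_smul_of_homog hf2 t (Fin.cons 1 (fun i' => z i' / t))
      rw [← hx] at this
      rw [this]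
      nlinarith

end
end

section
/- Let k be a positive integer and n = 4k. Let 𝒜 be the symmetric tensor of order 4 and dimension n with entries 𝒜_{iiii} = n for all i ∈ {1,…,n}, 𝒜_{i_1 i_2 i_3 i_4} = −1/6 whenever (i_1, i_2, i_3, i_4) is a permutation of (4l−3, 4l−2, 4l−1, 4l) for some l ∈ {1,…,k}, and all other entries zero; equivalently, 𝒜x^4 = n·Σ_{i=1}^n x_i^4 − 4·Σ_{l=1}^{k} x_{4l−3} x_{4l−2} x_{4l−1} x_{4l}. Then n + 1 is an H-eigenvalue of 𝒜 and every H-eigenvalue λ of 𝒜 satisfies λ ≤ n + 1; that is, the maximum H-eigenvalue of 𝒜 equals n + 1. -/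
open MvPolynomial Finset

noncomputable section

open Classical in
/-- The 4th order `n = 4k` dimensional tensor of Example 3.1: diagonal entries `n`,
entries `−1/6` at all permutations of `(4l−3, 4l−2, 4l−1, 4l)` (1-based), zero otherwise. -/
noncomputable def exTensor (k : ℕ) : (Fin 4 → Fin (4 * k)) → ℝ := fun g =>
  if ∀ j j' : Fin 4, g j = g j' then ((4 * k : ℕ) : ℝ)
  else if ∃ (l : Fin k) (σ : Equiv.Perm (Fin 4)),
      g = fun j => (⟨4 * l.1 + (σ j).1, by have := l.2; have := (σ j).2; omega⟩ : Fin (4 * k))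
    then -(1 / 6) else 0

/-!
Writing `𝒜` as `n` times the diagonal plus `-1/6` on each permutation of a block tuple
`(4l, 4l+1, 4l+2, 4l+3)`, every contraction of `𝒜` becomes a sum over constant tuples and
block tuples. In particular the `i`-th component of `𝒜x³` is `n xᵢ³ - Qᵢ`, where `Qᵢ` is the
product of the other three coordinates of the block of `i` (each appears in `3! = 6` tuples).
The vector equal to `(1, 1, 1, -1)` on every block has `Qᵢ = -xᵢ = -xᵢ³`, so it is an
eigenvector for `n + 1`. Conversely, at a coordinate of maximal modulus `|Qᵢ| ≤ |xᵢ|³`, so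
`(n - λ) xᵢ³ = Qᵢ` forces `|n - λ| ≤ 1`.
-/

theorem Fin.sum_cons_eq_sum_ite {α M : Type*} [Fintype α] [DecidableEq α] [AddCommMonoid M]
    {n : ℕ} (i : α) (f : (Fin (n + 1) → α) → M) :
    ∑ g : Fin n → α, f (Fin.cons i g) = ∑ g : Fin (n + 1) → α, if g 0 = i then f g else 0 := by
  rw [← (Fin.consEquiv fun _ => α).sum_comp, Fintype.sum_prod_type]
  simp [Fin.consEquiv]

theorem Equiv.Perm.prod_comp_succ {M : Type*} [CommMonoid M] {n : ℕ}
    (σ : Equiv.Perm (Fin (n + 1))) (f : Fin (n + 1) → M) :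
    ∏ j : Fin n, f (σ j.succ) = ∏ t ∈ univ.erase (σ 0), f t := by
  rw [← map_univ_equiv σ, ← Equiv.coe_toEmbedding, ← map_erase, prod_map, Fin.univ_succ,
    erase_cons, prod_map]
  rfl

theorem sum_perm_fin_four_ite_apply_zero {M : Type*} [CommSemiring M] (p : Fin 4)
    (f : Fin 4 → M) :
    ∑ σ : Equiv.Perm (Fin 4), (if σ 0 = p then ∏ j : Fin 3, f (σ j.succ) else 0)
      = 6 * ∏ t ∈ univ.erase p, f t := by
  have hcard : #{σ : Equiv.Perm (Fin 4) | σ 0 = p} = 6 := by revert p; decide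
  calc ∑ σ : Equiv.Perm (Fin 4), (if σ 0 = p then ∏ j : Fin 3, f (σ j.succ) else 0)
      = ∑ σ : Equiv.Perm (Fin 4), if σ 0 = p then ∏ t ∈ univ.erase p, f t else 0 :=
        sum_congr rfl fun σ _ => by split_ifs with h <;> simp [σ.prod_comp_succ, h]
    _ = 6 * ∏ t ∈ univ.erase p, f t := by
        rw [sum_ite, sum_const_zero, add_zero, sum_const, hcard, nsmul_eq_mul]
        norm_num

def blockEquiv (k : ℕ) : Fin k × Fin 4 ≃ Fin (4 * k) where
  toFun p := ⟨4 * p.1 + p.2, by omega⟩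
  invFun i := (⟨i / 4, by omega⟩, ⟨i % 4, by omega⟩)
  left_inv p := by ext <;> simp; omega
  right_inv i := by ext; simp; omega

def blockTuple (k : ℕ) (p : Fin k × Equiv.Perm (Fin 4)) : Fin 4 → Fin (4 * k) :=
  fun j => blockEquiv k (p.1, p.2 j)

theorem blockTuple_injective (k : ℕ) : Function.Injective (blockTuple k) := by
  rintro ⟨l, σ⟩ ⟨l', σ'⟩ h
  have hj (j : Fin 4) : (l, σ j) = (l', σ' j) := (blockEquiv k).injective (congrFun h j)
  simp only [Prod.mk.injEq] at hj
  exact Prod.ext (hj 0).1 (Equiv.ext fun j => (hj j).2)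

theorem blockTuple_ne_const {k : ℕ} (p : Fin k × Equiv.Perm (Fin 4)) (i : Fin (4 * k)) :
    blockTuple k p ≠ fun _ => i := by
  intro h
  have h01 : blockTuple k p 0 = blockTuple k p 1 := by rw [h]
  simp [blockTuple] at h01

theorem exTensor_eq (k : ℕ) (g : Fin 4 → Fin (4 * k)) :
    exTensor k g = ∑ i, (if g = (fun _ => i) then ((4 * k : ℕ) : ℝ) else 0)
      + ∑ p, if g = blockTuple k p then -(1 / 6) else 0 := by
  unfold exTensor
  split_ifs with hdiag hblock
  · rw [show g = fun _ => g 0 from funext fun j => hdiag j 0]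
    simp [(blockTuple_ne_const _ _).symm, funext_iff]
  · obtain ⟨l, σ, rfl⟩ := hblock
    change _ = ∑ i, (if blockTuple k (l, σ) = (fun _ => i) then _ else _)
      + ∑ p, if blockTuple k (l, σ) = blockTuple k p then _ else _
    simp [blockTuple_ne_const, (blockTuple_injective k).eq_iff]
  · have hconst (i : Fin (4 * k)) : g ≠ fun _ => i := fun h => hdiag (by simp [h])
    have hblock' (p : Fin k × Equiv.Perm (Fin 4)) : g ≠ blockTuple k p :=
      fun h => hblock ⟨p.1, p.2, h⟩
    simp [hconst, hblock']

theorem sum_exTensor_mul (k : ℕ) (F : (Fin 4 → Fin (4 * k)) → ℝ) :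
    ∑ g, exTensor k g * F g
      = ((4 * k : ℕ) : ℝ) * ∑ i, F (fun _ => i) - 1 / 6 * ∑ p, F (blockTuple k p) := by
  simp only [exTensor_eq, add_mul, sum_mul, ite_mul, zero_mul, sum_add_distrib]
  simp only [sum_comm (s := (univ : Finset (Fin 4 → Fin (4 * k))))]
  simp [mul_sum]
  ring

theorem tmul_exTensor (k : ℕ) (x : Fin (4 * k) → ℝ) :
    tmul (exTensor k) x
      = ((4 * k : ℕ) : ℝ) * ∑ i, x i ^ 4 - 4 * ∑ l, ∏ j, x (blockEquiv k (l, j)) := by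
  have hperm (l : Fin k) (σ : Equiv.Perm (Fin 4)) :
      ∏ j, x (blockEquiv k (l, σ j)) = ∏ j, x (blockEquiv k (l, j)) :=
    Equiv.prod_comp σ fun j => x (blockEquiv k (l, j))
  rw [tmul, sum_exTensor_mul, Fintype.sum_prod_type]
  simp only [blockTuple, hperm]
  simp [mul_sum, Fintype.card_perm, Nat.factorial, ← mul_assoc]
  norm_num

theorem sum_exTensor_cons (k : ℕ) (x : Fin (4 * k) → ℝ) (i : Fin (4 * k)) :
    ∑ g : Fin 3 → Fin (4 * k), exTensor k (Fin.cons i g) * ∏ j, x (g j)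
      = ((4 * k : ℕ) : ℝ) * x i ^ 3 - ∏ t ∈ univ.erase ((blockEquiv k).symm i).2,
          x (blockEquiv k (((blockEquiv k).symm i).1, t)) := by
  have hcons := Fin.sum_cons_eq_sum_ite i fun g => exTensor k g * ∏ j : Fin 3, x (g j.succ)
  simp only [Fin.cons_succ] at hcons
  rw [hcons]
  simp only [← mul_ite_zero]
  rw [sum_exTensor_mul, Fintype.sum_prod_type]
  obtain ⟨⟨b, p⟩, rfl⟩ := (blockEquiv k).surjective i
  simp only [blockTuple, EmbeddingLike.apply_eq_iff_eq, Prod.mk.injEq, ite_and,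
    Equiv.symm_apply_apply]
  simp [sum_perm_fin_four_ite_apply_zero p fun t => x (blockEquiv k (b, t))]

theorem isHEig_exTensor (k : ℕ) (hk : 0 < k) : IsHEig (exTensor k) (((4 * k : ℕ) : ℝ) + 1) := by
  set v : Fin 4 → ℝ := ![1, 1, 1, -1]
  have hv_sq (p : Fin 4) : v p ^ 2 = 1 := by fin_cases p <;> norm_num [v]
  have hv_erase (p : Fin 4) : ∏ t ∈ univ.erase p, v t = -v p := by
    have h : v p * ∏ t ∈ univ.erase p, v t = -1 := by
      rw [mul_prod_erase _ _ (mem_univ p)]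
      simp [v, Fin.prod_univ_four]
    linear_combination v p * h - (∏ t ∈ univ.erase p, v t) * hv_sq p
  refine ⟨fun i => v ((blockEquiv k).symm i).2, fun h => ?_, fun i => ?_⟩
  · have h0 := congrFun h (blockEquiv k (⟨0, hk⟩, 0))
    norm_num [v] at h0
  · obtain ⟨⟨b, p⟩, rfl⟩ := (blockEquiv k).surjective i
    have h := sum_exTensor_cons k (fun i => v ((blockEquiv k).symm i).2) (blockEquiv k (b, p))
    simp only [Equiv.symm_apply_apply, hv_erase] at h
    simp only [h, Equiv.symm_apply_apply]
    linear_combination (-v p) * hv_sq p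

theorem le_of_isHEig_exTensor (k : ℕ) {lam : ℝ} (h : IsHEig (exTensor k) lam) :
    lam ≤ ((4 * k : ℕ) : ℝ) + 1 := by
  obtain ⟨x, hx0, hx⟩ := h
  obtain ⟨j₀, hj₀⟩ := Function.ne_iff.1 hx0
  have : Nonempty (Fin (4 * k)) := ⟨j₀⟩
  obtain ⟨i, hi⟩ := Finite.exists_max fun j => |x j|
  have hxi : 0 < |x i| := (abs_pos.2 hj₀).trans_le (hi j₀)
  obtain ⟨⟨b, p⟩, rfl⟩ := (blockEquiv k).surjective i
  set Q := ∏ t ∈ univ.erase p, x (blockEquiv k (b, t))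
  have hQ : |Q| ≤ |x (blockEquiv k (b, p))| ^ 3 :=
    calc |Q| = ∏ t ∈ univ.erase p, |x (blockEquiv k (b, t))| := abs_prod _ _
      _ ≤ ∏ t ∈ univ.erase p, |x (blockEquiv k (b, p))| :=
        prod_le_prod (fun _ _ => abs_nonneg _) fun _ _ => hi _
      _ = |x (blockEquiv k (b, p))| ^ 3 := by simp
  have heq : (((4 * k : ℕ) : ℝ) - lam) * x (blockEquiv k (b, p)) ^ 3 = Q := by
    have := hx (blockEquiv k (b, p))
    rw [sum_exTensor_cons, Equiv.symm_apply_apply] at this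
    linear_combination this
  have hdist : |((4 * k : ℕ) : ℝ) - lam| ≤ 1 := by
    rw [← heq, abs_mul, abs_pow] at hQ
    exact le_of_mul_le_mul_right (by linarith) (pow_pos hxi 3)
  linarith [neg_abs_le (((4 * k : ℕ) : ℝ) - lam)]

/-- Example 3.1: for the tensor above, `𝒜x⁴ = n ∑ x_i⁴ − 4 ∑_l x_{4l−3}x_{4l−2}x_{4l−1}x_{4l}`
with `n = 4k`, and the maximum H-eigenvalue of `𝒜` equals `n + 1`. -/
theorem example31 (k : ℕ) (hk : 0 < k) :
    (∀ x : Fin (4 * k) → ℝ, tmul (exTensor k) x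
        = ((4 * k : ℕ) : ℝ) * (∑ i, x i ^ 4)
          - 4 * ∑ l : Fin k, ∏ j : Fin 4,
              x ⟨4 * l.1 + j.1, by have := l.2; have := j.2; omega⟩) ∧
    IsHEig (exTensor k) (((4 * k : ℕ) : ℝ) + 1) ∧
    (∀ lam : ℝ, IsHEig (exTensor k) lam → lam ≤ ((4 * k : ℕ) : ℝ) + 1) :=
  ⟨tmul_exTensor k, isHEig_exTensor k hk, fun _ => le_of_isHEig_exTensor k⟩
end
end

section
/- Let m be even and let 𝒜 be a symmetric tensor of order m and dimension n whose associated polynomial decomposes as 𝒜x^m = Σ_{l=1}^s 𝒜_{Γ_l} x_{Γ_l}^m for all x ∈ ℝ^n, where Γ_1,…,Γ_s ⊆ {1,…,n} with ∪_{l=1}^s Γ_l = {1,…,n} and each 𝒜_{Γ_l} is an m-th order |Γ_l|-dimensional tensor. Suppose t ∈ ℝ and real numbers ρ_i^l (i ∈ Γ_l, l = 1,…,s) are such that for each l the polynomial −𝒜_{Γ_l} x_{Γ_l}^m + Σ_{i∈Γ_l} ρ_i^l x_i^m is a sums-of-squares polynomial, and Σ_{l : i ∈ Γ_l} ρ_i^l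 ≤ t for each i = 1,…,n. Then 𝒜x^m ≤ t·Σ_{i=1}^n x_i^m for all x ∈ ℝ^n; in particular, every H-eigenvalue λ of 𝒜 satisfies λ ≤ t. -/
open MvPolynomial Finset

noncomputable section

lemma eval_subTpoly {m n : ℕ} (Γ : Finset (Fin n)) (B : (Fin m → Γ) → ℝ) (x : Fin n → ℝ) :
    MvPolynomial.eval (fun i : Γ => x i.1) (subTpoly Γ B) = subTmul Γ B x := by
  simp [subTpoly, subTmul]

lemma sos_eval_nonneg {σ : Type*} {p : MvPolynomial σ ℝ} (h : IsSOSPoly p) (v : σ → ℝ) :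
    0 ≤ MvPolynomial.eval v p := by
  obtain ⟨r, q, rfl⟩ := h
  rw [map_sum]
  exact Finset.sum_nonneg fun j _ => by rw [map_pow]; positivity

/-- Feasibility bound in Theorem 3.2 (3.3): if `𝒜x^m = ∑_l 𝒜_{Γ_l} x_{Γ_l}^m`, each
`−𝒜_{Γ_l}x_{Γ_l}^m + ∑_{i∈Γ_l} ρ_i^l x_i^m` is SOS, and `∑_{l : i ∈ Γ_l} ρ_i^l ≤ t`
for every `i`, then `𝒜x^m ≤ t ∑ x_i^m` for all `x`, hence every H-eigenvalue is `≤ t`. -/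
theorem feasible_upper_bound (m n s : ℕ) (heven : Even (m + 1))
    (A : (Fin (m + 1) → Fin n) → ℝ) (hsym : IsSymT A)
    (Γ : Fin s → Finset (Fin n)) (B : ∀ l : Fin s, (Fin (m + 1) → Γ l) → ℝ)
    (hcover : Finset.univ.biUnion Γ = Finset.univ)
    (hII : ∀ x : Fin n → ℝ, tmul A x = ∑ l, subTmul (Γ l) (B l) x)
    (t : ℝ) (ρ : Fin s → Fin n → ℝ)
    (hsos : ∀ l, IsSOSPoly (- subTpoly (Γ l) (B l)
        + ∑ i : ↥(Γ l), (MvPolynomial.C (ρ l i.1) * MvPolynomial.X i ^ (m + 1)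
            : MvPolynomial ↥(Γ l) ℝ)))
    (hsum : ∀ i : Fin n, ∑ l ∈ Finset.univ.filter (fun l => i ∈ Γ l), ρ l i ≤ t) :
    (∀ x : Fin n → ℝ, tmul A x ≤ t * ∑ i, x i ^ (m + 1)) ∧
    (∀ lam : ℝ, IsHEig A lam → lam ≤ t) := by
  have key : ∀ x : Fin n → ℝ, tmul A x ≤ t * ∑ i, x i ^ (m + 1) := by
    intro x
    have hx : ∀ i : Fin n, (0:ℝ) ≤ x i ^ (m + 1) := fun i => heven.pow_nonneg _
    have hl : ∀ l, subTmul (Γ l) (B l) x ≤ ∑ i : Γ l, ρ l i.1 * x i.1 ^ (m + 1) := by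
      intro l
      have := sos_eval_nonneg (hsos l) (fun i : Γ l => x i.1)
      rw [map_add, map_neg, eval_subTpoly, map_sum] at this
      simp only [map_mul, map_pow, eval_C, eval_X] at this
      linarith
    calc tmul A x = ∑ l, subTmul (Γ l) (B l) x := hII x
      _ ≤ ∑ l, ∑ i : Γ l, ρ l i.1 * x i.1 ^ (m + 1) :=
          Finset.sum_le_sum fun l _ => hl l
      _ = ∑ l, ∑ i ∈ Γ l, ρ l i * x i ^ (m + 1) := by
          refine Finset.sum_congr rfl fun l _ => ?_
          exact Finset.sum_coe_sort (Γ l) (fun i => ρ l i * x i ^ (m + 1))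
      _ = ∑ l : Fin s, ∑ i : Fin n, if i ∈ Γ l then ρ l i * x i ^ (m + 1) else 0 := by
          simp [Finset.sum_ite_mem]
      _ = ∑ i : Fin n, ∑ l ∈ Finset.univ.filter (fun l => i ∈ Γ l), ρ l i * x i ^ (m + 1) := by
          rw [Finset.sum_comm]
          refine Finset.sum_congr rfl fun i _ => ?_
          rw [Finset.sum_filter]
      _ = ∑ i : Fin n, (∑ l ∈ Finset.univ.filter (fun l => i ∈ Γ l), ρ l i) * x i ^ (m + 1) := by
          simp [Finset.sum_mul]
      _ ≤ ∑ i : Fin n, t * x i ^ (m + 1) :=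
          Finset.sum_le_sum fun i _ => mul_le_mul_of_nonneg_right (hsum i) (hx i)
      _ = t * ∑ i, x i ^ (m + 1) := by rw [Finset.mul_sum]
  refine ⟨key, ?_⟩
  rintro lam ⟨x, hx0, hx⟩
  have hdec : tmul A x = lam * ∑ i, x i ^ (m + 1) := by
    have : tmul A x = ∑ p : Fin n × (Fin m → Fin n),
        A (Fin.cons p.1 p.2) * ∏ j, x ((Fin.cons p.1 p.2 : Fin (m+1) → Fin n) j) := by
      rw [tmul]
      exact (Fintype.sum_equiv (Fin.consEquiv (fun _ : Fin (m+1) => Fin n)) _ _ (by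
        intro p
        rcases p with ⟨i, g⟩
        rfl)).symm
    rw [this, Fintype.sum_prod_type, Finset.mul_sum]
    refine Finset.sum_congr rfl fun i _ => ?_
    have : ∀ g : Fin m → Fin n,
        A (Fin.cons i g) * ∏ j, x ((Fin.cons i g : Fin (m+1) → Fin n) j)
          = x i * (A (Fin.cons i g) * ∏ j, x (g j)) := by
      intro g
      rw [Fin.prod_univ_succ]
      simp [mul_comm, mul_assoc, mul_left_comm]
    rw [Finset.sum_congr rfl fun g _ => this g, ← Finset.mul_sum, hx i, pow_succ]
    ring
  obtain ⟨i0, hi0⟩ := Function.ne_iff.mp hx0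
  have hS : 0 < ∑ i, x i ^ (m + 1) :=
    Finset.sum_pos' (fun i _ => heven.pow_nonneg _)
      ⟨i0, Finset.mem_univ _, heven.pow_pos hi0⟩
  have := key x
  rw [hdec] at this
  exact le_of_mul_le_mul_right (by linarith [this]) hS


end
end
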